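/- Let X₁, X₂ and Y be Banach spaces, X := X₁ × X₂ with the maximum norm, G ⊆ X open, and f : G → Y an arbitrary mapping. Suppose L(X₁,Y) is separable. Then there exists a σ-upper porous set A ⊆ G such that for all x ∈ G \ A: if f is Lipschitz at x and both partial Fréchet derivatives of f exist at x, then f is Fréchet differentiable at x. -/

import Mathlib

/-!
Fix a dense sequence `Tᵢ` in `L(X₁, Y)`. At a point `x` where `f` is Lipschitz and has partial
derivatives `U`, `V` but is not differentiable, the derivative `V` absorbs the error along `X₂`,
so for some `Tᵢ` close to `U` the mixed increment `f (x + p) - f (x₁, x₂ + p₂) - Tᵢ p₁` exceeds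
`12 ε ‖p‖` for arbitrarily small `p`, while near `x` the function is `N`-Lipschitz and `Tᵢ`
approximates the first partial map to within `ε`. For fixed `(i, N, ε, r)` the set of such points
is porous: if points `z` near `x + p` and `w` near `(x₁, x₂ + p₂)` belonged to it, walking from
`x + p` to `(x₁, x₂ + p₂)` via `z` and `w`, with vertical steps controlled by the Lipschitz bound
and horizontal ones by `Tᵢ`, would bound the increment by `11 ε ‖p‖`. So one of the two balls
around these points, of radius proportional to `‖p‖`, avoids the set.
-/

open Metric Set Topology

/-- `A` is (upper) porous at `x`. -/
def PorousAt {Z : Type*} [MetricSpace Z] (A : Set Z) (x : Z) : Prop :=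
  ∃ c > (0 : ℝ), ∀ δ > (0 : ℝ), ∃ t, t ∈ Metric.ball x δ ∧ t ≠ x ∧
    Metric.ball t (c * dist t x) ∩ A = ∅

/-- `A` is (upper) porous: porous at each of its points. -/
def Porous {Z : Type*} [MetricSpace Z] (A : Set Z) : Prop :=
  ∀ x ∈ A, PorousAt A x

/-- `A` is σ-(upper) porous: a countable union of porous sets. -/
def SigmaPorous {Z : Type*} [MetricSpace Z] (A : Set Z) : Prop :=
  ∃ u : ℕ → Set Z, (∀ n, Porous (u n)) ∧ A = ⋃ n, u n

/-- `f` is Lipschitz at `x`. -/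
def LipschitzAtPt {Z Y : Type*} [NormedAddCommGroup Z] [NormedAddCommGroup Y]
    (f : Z → Y) (x : Z) : Prop :=
  ∃ L : ℝ, ∀ᶠ y in nhds x, ‖f y - f x‖ ≤ L * ‖y - x‖

namespace Porous

variable {Z : Type*} [MetricSpace Z]

theorem mono {A B : Set Z} (hA : Porous A) (hBA : B ⊆ A) : Porous B := by
  intro x hx
  obtain ⟨c, hc, hholes⟩ := hA x (hBA hx)
  refine ⟨c, hc, fun δ hδ => ?_⟩
  obtain ⟨t, htx, hne, hempty⟩ := hholes δ hδ
  exact ⟨t, htx, hne, subset_eq_empty (inter_subset_inter_right _ hBA) hempty⟩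

end Porous

theorem sigmaPorous_iUnion {Z ι : Type*} [MetricSpace Z] [Countable ι] {u : ι → Set Z}
    (hu : ∀ i, Porous (u i)) : SigmaPorous (⋃ i, u i) := by
  rcases isEmpty_or_nonempty ι with hι | hι
  · refine ⟨fun _ => ∅, fun _ x hx => absurd hx (notMem_empty x), ?_⟩
    simp only [iUnion_of_empty, iUnion_empty]
  · obtain ⟨e, he⟩ := exists_surjective_nat ι
    exact ⟨u ∘ e, fun n => hu (e n), he.iUnion_comp u |>.symm⟩

section LipschitzBound

variable {Z Y : Type*} [PseudoMetricSpace Z] [SeminormedAddCommGroup Y]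

def IsLipschitzBoundAt (f : Z → Y) (N r : ℝ) (z : Z) : Prop :=
  ∀ y, dist y z ≤ r → ‖f y - f z‖ ≤ N * dist y z

theorem IsLipschitzBoundAt.norm_sub_le {f : Z → Y} {N r : ℝ} {z : Z}
    (hz : IsLipschitzBoundAt f N r z) {a b : Z} (ha : dist a z ≤ r) (hb : dist b z ≤ r) :
    ‖f a - f b‖ ≤ N * (dist a z + dist b z) := by
  rw [← sub_sub_sub_cancel_right _ _ (f z), mul_add]
  exact (_root_.norm_sub_le _ _).trans (add_le_add (hz a ha) (hz b hb))

theorem LipschitzAtPt.exists_eventually_isLipschitzBoundAt {E F : Type*} [NormedAddCommGroup E]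
    [NormedAddCommGroup F] {f : E → F} {x : E} (hf : LipschitzAtPt f x) :
    ∃ N : ℕ, ∀ᶠ r in 𝓝 (0 : ℝ), IsLipschitzBoundAt f N r x := by
  obtain ⟨L, hL⟩ := hf
  refine ⟨⌈L⌉₊, (eventually_closedBall_subset hL).mono fun r hr y hy => ?_⟩
  calc ‖f y - f x‖ ≤ L * ‖y - x‖ := hr (mem_closedBall.2 hy)
    _ ≤ ⌈L⌉₊ * dist y x := by rw [dist_eq_norm]; gcongr; exact Nat.le_ceil L

end LipschitzBound

section FstPartialApprox

variable {X₁ X₂ Y : Type*} [NormedAddCommGroup X₁] [NormedSpace ℝ X₁]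
  [NormedAddCommGroup Y] [NormedSpace ℝ Y]

def IsFstPartialApproxAt (f : X₁ × X₂ → Y) (T : X₁ →L[ℝ] Y) (ε r : ℝ) (z : X₁ × X₂) : Prop :=
  ∀ h : X₁, ‖h‖ ≤ r → ‖f (z.1 + h, z.2) - f z - T h‖ ≤ ε * ‖h‖

theorem IsFstPartialApproxAt.norm_sub_sub_le {f : X₁ × X₂ → Y} {T : X₁ →L[ℝ] Y} {ε r : ℝ}
    {z : X₁ × X₂} (hz : IsFstPartialApproxAt f T ε r z) {a b : X₁}
    (ha : ‖a - z.1‖ ≤ r) (hb : ‖b - z.1‖ ≤ r) :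
    ‖f (a, z.2) - f (b, z.2) - T (a - b)‖ ≤ ε * (‖a - z.1‖ + ‖b - z.1‖) := by
  have key : f (a, z.2) - f (b, z.2) - T (a - b) =
      (f (z.1 + (a - z.1), z.2) - f z - T (a - z.1)) -
        (f (z.1 + (b - z.1), z.2) - f z - T (b - z.1)) := by
    simp only [add_sub_cancel, map_sub]
    abel
  rw [key, mul_add]
  exact (norm_sub_le _ _).trans (add_le_add (hz _ ha) (hz _ hb))

theorem HasFDerivAt.eventually_isFstPartialApproxAt {f : X₁ × X₂ → Y} {U T : X₁ →L[ℝ] Y}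
    {ε : ℝ} {x : X₁ × X₂} (hU : HasFDerivAt (fun t => f (t, x.2)) U x.1) (hTU : ‖T - U‖ < ε) :
    ∀ᶠ r in 𝓝 (0 : ℝ), IsFstPartialApproxAt f T ε r x := by
  have hsmall := (hasFDerivAt_iff_isLittleO_nhds_zero.1 hU).def (sub_pos.2 hTU)
  filter_upwards [eventually_closedBall_subset hsmall] with r hr h hh
  have hUh : ‖f (x.1 + h, x.2) - f x - U h‖ ≤ (ε - ‖T - U‖) * ‖h‖ :=
    hr (mem_closedBall_zero_iff.2 hh)
  calc ‖f (x.1 + h, x.2) - f x - T h‖ = ‖(f (x.1 + h, x.2) - f x - U h) - (T - U) h‖ := by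
        rw [sub_apply]; abel_nf
    _ ≤ (ε - ‖T - U‖) * ‖h‖ + ‖T - U‖ * ‖h‖ := norm_sub_le_of_le hUh ((T - U).le_opNorm h)
    _ = ε * ‖h‖ := by ring

end FstPartialApprox

theorem exists_pos_frequently_lt_norm_of_not_hasFDerivAt {𝕜 E F : Type*}
    [NontriviallyNormedField 𝕜] [NormedAddCommGroup E] [NormedSpace 𝕜 E]
    [NormedAddCommGroup F] [NormedSpace 𝕜 F] {f : E → F} {D : E →L[𝕜] F} {x : E}
    (h : ¬ HasFDerivAt f D x) :
    ∃ ε₀ > 0, ∃ᶠ q in 𝓝 0, ε₀ * ‖q‖ < ‖f (x + q) - f x - D q‖ := by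
  rw [hasFDerivAt_iff_isLittleO_nhds_zero, Asymptotics.isLittleO_iff] at h
  simpa only [not_forall, Filter.not_eventually, not_le, exists_prop] using h

section ProductSpace

variable {X₁ X₂ Y : Type*} [NormedAddCommGroup X₁] [NormedSpace ℝ X₁] [PseudoMetricSpace X₂]
  [NormedAddCommGroup Y] [NormedSpace ℝ Y]
  {f : X₁ × X₂ → Y} {T : X₁ →L[ℝ] Y} {N ε r : ℝ}

theorem norm_sub_sub_le_of_dist_le {z w : X₁ × X₂} (hLz : IsLipschitzBoundAt f N r z)
    (hLw : IsLipschitzBoundAt f N r w) (hPz : IsFstPartialApproxAt f T ε r z)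
    (hPw : IsFstPartialApproxAt f T ε r w) (hN : 0 ≤ N) (hε : 0 ≤ ε)
    {a b : X₁} {y : X₂} {ρ : ℝ} (ha : dist (a, y) z ≤ ρ) (hb : dist (b, y) w ≤ ρ)
    (hr : ‖a - b‖ + 2 * ρ ≤ r) :
    ‖f (a, y) - f (b, y) - T (a - b)‖ ≤ 6 * N * ρ + ε * (‖a - b‖ + 4 * ρ) := by
  obtain ⟨z₁, z₂⟩ := z
  obtain ⟨w₁, w₂⟩ := w
  have ⟨haz, hyz⟩ : dist a z₁ ≤ ρ ∧ dist y z₂ ≤ ρ := max_le_iff.1 ha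
  have ⟨hbw, hyw⟩ : dist b w₁ ≤ ρ ∧ dist y w₂ ≤ ρ := max_le_iff.1 hb
  have hazn : ‖a - z₁‖ ≤ ρ := dist_eq_norm a z₁ ▸ haz
  have hbwn : ‖b - w₁‖ ≤ ρ := dist_eq_norm b w₁ ▸ hbw
  have hρ : 0 ≤ ρ := dist_nonneg.trans haz
  have hρr : ρ ≤ r := by linarith [norm_nonneg (a - b)]
  have h2ρr : 2 * ρ ≤ r := by linarith [norm_nonneg (a - b)]
  have hzw : ‖z₁ - w₁‖ ≤ ‖a - b‖ + 2 * ρ := by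
    calc ‖z₁ - w₁‖ = ‖(a - b) + (b - w₁) - (a - z₁)‖ := by congr 1; abel
      _ ≤ ‖a - b‖ + ‖b - w₁‖ + ‖a - z₁‖ := norm_sub_le_of_le (norm_add_le _ _) le_rfl
      _ ≤ ‖a - b‖ + 2 * ρ := by linarith
  have hw₂z₂ : dist w₂ z₂ ≤ 2 * ρ := by linarith [dist_triangle_left w₂ z₂ y]
  -- the increment is split along the path (a, y) → (a, z₂) → z → (z₁, w₂) → (b, w₂) → (b, y)
  have e₁ : ‖f (a, y) - f (a, z₂)‖ ≤ N * (ρ + ρ) :=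
    (hLz.norm_sub_le (ha.trans hρr) (by simpa using haz.trans hρr)).trans
      (by gcongr; simpa using haz)
  have e₂ : ‖f (a, z₂) - f (z₁, z₂) - T (a - z₁)‖ ≤ ε * ρ := by
    simpa using (hPz.norm_sub_sub_le (a := a) (b := z₁) (hazn.trans hρr)
      (by simpa using hρ.trans hρr)).trans (by gcongr; simpa using hazn)
  have e₃ : ‖f (z₁, w₂) - f (z₁, z₂)‖ ≤ N * (2 * ρ) :=
    (hLz (z₁, w₂) (by simpa using hw₂z₂.trans h2ρr)).trans (by gcongr; simpa using hw₂z₂)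
  have e₄ : ‖f (z₁, w₂) - f (b, w₂) - T (z₁ - b)‖ ≤ ε * (‖a - b‖ + 2 * ρ + ρ) :=
    (hPw.norm_sub_sub_le (hzw.trans hr) (hbwn.trans hρr)).trans (by gcongr)
  have e₅ : ‖f (b, w₂) - f (b, y)‖ ≤ N * (ρ + ρ) :=
    (hLw.norm_sub_le (by simpa using hbw.trans hρr) (hb.trans hρr)).trans
      (by gcongr; simpa using hbw)
  have split : f (a, y) - f (b, y) - T (a - b) = (f (a, y) - f (a, z₂))
      + (f (a, z₂) - f (z₁, z₂) - T (a - z₁)) - (f (z₁, w₂) - f (z₁, z₂))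
      + (f (z₁, w₂) - f (b, w₂) - T (z₁ - b)) + (f (b, w₂) - f (b, y)) := by
    rw [← sub_add_sub_cancel a z₁ b, map_add]
    abel
  rw [split]
  refine (norm_add_le_of_le (norm_add_le_of_le (norm_sub_le_of_le
    (norm_add_le_of_le e₁ e₂) e₃) e₄) e₅).trans_eq ?_
  ring

end ProductSpace

section LargeIncrement

variable {X₁ X₂ Y : Type*} [NormedAddCommGroup X₁] [NormedSpace ℝ X₁] [NormedAddCommGroup X₂]
  [NormedAddCommGroup Y] [NormedSpace ℝ Y]
  {f : X₁ × X₂ → Y} {T : X₁ →L[ℝ] Y} {N ε r : ℝ}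

-- `T` plays the role of the first partial derivative; the factor `12` beats the constant `11`
-- of `norm_increment_le_of_dist_le`
def largeIncrementSet (f : X₁ × X₂ → Y) (T : X₁ →L[ℝ] Y) (N ε r : ℝ) : Set (X₁ × X₂) :=
  {z | IsLipschitzBoundAt f N r z ∧ IsFstPartialApproxAt f T ε r z ∧
    ∃ᶠ p in 𝓝 0, 12 * ε * ‖p‖ < ‖f (z + p) - f (z.1, z.2 + p.2) - T p.1‖}

theorem norm_increment_le_of_dist_le {x p z w : X₁ × X₂} {c : ℝ}
    (hz : z ∈ largeIncrementSet f T N ε r) (hw : w ∈ largeIncrementSet f T N ε r)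
    (hN : 0 ≤ N) (hε : 0 ≤ ε) (hcN : N * c ≤ ε) (hc : c ≤ 1) (hpr : 3 * ‖p‖ ≤ r)
    (hzp : dist (x + p) z ≤ c * ‖p‖) (hwp : dist (x.1, x.2 + p.2) w ≤ c * ‖p‖) :
    ‖f (x + p) - f (x.1, x.2 + p.2) - T p.1‖ ≤ 11 * ε * ‖p‖ := by
  have hp₁ : ‖p.1‖ ≤ ‖p‖ := norm_fst_le p
  have key := norm_sub_sub_le_of_dist_le hz.1 hw.1 hz.2.1 hw.2.1 hN hε
    (a := x.1 + p.1) (b := x.1) (y := x.2 + p.2) hzp hwp (by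
      rw [add_sub_cancel_left]; nlinarith [norm_nonneg p])
  rw [add_sub_cancel_left] at key
  refine key.trans ?_
  calc 6 * N * (c * ‖p‖) + ε * (‖p.1‖ + 4 * (c * ‖p‖))
      = 6 * (N * c) * ‖p‖ + ε * (‖p.1‖ + 4 * c * ‖p‖) := by ring
    _ ≤ 6 * ε * ‖p‖ + ε * (‖p‖ + 4 * 1 * ‖p‖) := by gcongr
    _ = 11 * ε * ‖p‖ := by ring

theorem IsFstPartialApproxAt.snd_ne_zero {x p : X₁ × X₂} (hPx : IsFstPartialApproxAt f T ε r x)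
    (hε : 0 ≤ ε) (hpr : ‖p‖ ≤ r)
    (hlarge : ε * ‖p‖ < ‖f (x + p) - f (x.1, x.2 + p.2) - T p.1‖) : p.2 ≠ 0 := by
  intro h
  have hxp : x + p = (x.1 + p.1, x.2) := by ext <;> simp [h]
  have hx : (x.1, x.2 + p.2) = x := by simp [h]
  rw [hxp, hx] at hlarge
  have hp₁ : ε * ‖p.1‖ ≤ ε * ‖p‖ := by gcongr; exact norm_fst_le p
  linarith [hPx p.1 ((norm_fst_le p).trans hpr)]

theorem porous_largeIncrementSet (hN : 0 ≤ N) (hε : 0 < ε) (hr : 0 < r) :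
    Porous (largeIncrementSet f T N ε r) := by
  rintro x ⟨-, hPx, hfreq⟩
  set c := ε / (N + ε)
  have hc₀ : 0 < c := by positivity
  have hcN : N * c ≤ ε := by
    rw [mul_div_assoc', div_le_iff₀ (by positivity)]; nlinarith
  have hc₁ : c ≤ 1 := (div_le_one (by positivity)).2 (by linarith)
  refine ⟨c, hc₀, fun δ hδ => ?_⟩
  obtain ⟨p, hlarge, hpδ⟩ :=
    (hfreq.and_eventually (ball_mem_nhds 0 (lt_min hδ (by positivity : 0 < r / 3)))).exists
  rw [dist_zero_right, lt_min_iff] at hpδ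
  obtain ⟨hpδ, hpr⟩ := hpδ
  have hp₂ : p.2 ≠ 0 := hPx.snd_ne_zero hε.le (by linarith) <|
    (by nlinarith [norm_nonneg p] : ε * ‖p‖ ≤ 12 * ε * ‖p‖).trans_lt hlarge
  have hp : p ≠ 0 := fun h => hp₂ (by simp [h])
  set t : X₁ × X₂ := (x.1, x.2 + p.2)
  have htx : dist t x = ‖p.2‖ := by simp [t, Prod.dist_eq]
  have hxp : dist (x + p) x = ‖p‖ := dist_self_add_left p x
  -- points of the set near both `t` and `x + p` would force the increment at `p` below `11 ε ‖p‖`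
  by_cases hhole : ball t (c * dist t x) ∩ largeIncrementSet f T N ε r = ∅
  · refine ⟨t, ?_, ?_, hhole⟩
    · rw [mem_ball, htx]; linarith [norm_snd_le p]
    · rw [← dist_pos, htx]; exact norm_pos_iff.2 hp₂
  obtain ⟨w, hwt, hw⟩ := nonempty_iff_ne_empty.2 hhole
  refine ⟨x + p, by rwa [mem_ball, hxp], by rw [← dist_pos, hxp]; exact norm_pos_iff.2 hp, ?_⟩
  rw [eq_empty_iff_forall_notMem]
  rintro z ⟨hzx, hz⟩
  rw [mem_ball, hxp] at hzx
  rw [mem_ball, htx] at hwt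
  have hsmall := norm_increment_le_of_dist_le hz hw hN hε.le hcN hc₁ (by linarith)
    (by rw [dist_comm]; exact hzx.le)
    (by rw [dist_comm]; exact hwt.le.trans (by gcongr; exact norm_snd_le p))
  nlinarith [norm_pos_iff.2 hp]

variable [NormedSpace ℝ X₂]

theorem frequently_lt_norm_increment {U : X₁ →L[ℝ] Y} {V : X₂ →L[ℝ] Y} {x : X₁ × X₂} {ε₀ : ℝ}
    (hV : HasFDerivAt (fun t => f (x.1, t)) V x.2) (hε : 0 < ε) (hTU : ‖T - U‖ ≤ ε)
    (hεε₀ : 14 * ε ≤ ε₀) (hfreq : ∃ᶠ q in 𝓝 0, ε₀ * ‖q‖ < ‖f (x + q) - f x - U.coprod V q‖) :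
    ∃ᶠ p in 𝓝 0, 12 * ε * ‖p‖ < ‖f (x + p) - f (x.1, x.2 + p.2) - T p.1‖ := by
  have hVsmall : ∀ᶠ q in 𝓝 (0 : X₁ × X₂), ‖f (x.1, x.2 + q.2) - f x - V q.2‖ ≤ ε * ‖q‖ :=
    (((hasFDerivAt_iff_isLittleO_nhds_zero.1 hV).comp_tendsto
      (continuous_snd.tendsto' 0 0 rfl)).def hε).mono fun q hq =>
        hq.trans (by gcongr; exact norm_snd_le q)
  refine (hfreq.and_eventually hVsmall).mono fun q ⟨hq, hqV⟩ => ?_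
  have hTUq : ‖(T - U) q.1‖ ≤ ε * ‖q‖ :=
    ((T - U).le_opNorm _).trans (mul_le_mul hTU (norm_fst_le q) (norm_nonneg _) hε.le)
  have split : f (x + q) - f x - U.coprod V q = (f (x + q) - f (x.1, x.2 + q.2) - T q.1)
      + (f (x.1, x.2 + q.2) - f x - V q.2) + (T - U) q.1 := by
    rw [ContinuousLinearMap.coprod_apply, sub_apply]; abel
  rw [split] at hq
  nlinarith [norm_add₃_le (a := f (x + q) - f (x.1, x.2 + q.2) - T q.1)
    (b := f (x.1, x.2 + q.2) - f x - V q.2) (c := (T - U) q.1),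
    mul_le_mul_of_nonneg_right hεε₀ (norm_nonneg q)]

theorem exists_mem_largeIncrementSet {T : ℕ → X₁ →L[ℝ] Y} (hT : DenseRange T) {x : X₁ × X₂}
    (hf : LipschitzAtPt f x) (h₁ : DifferentiableAt ℝ (fun t => f (t, x.2)) x.1)
    (h₂ : DifferentiableAt ℝ (fun t => f (x.1, t)) x.2) (hnd : ¬ DifferentiableAt ℝ f x) :
    ∃ i N j m : ℕ, x ∈ largeIncrementSet f (T i) N (1 / (j + 1)) (1 / (m + 1)) := by
  set U := fderiv ℝ (fun t => f (t, x.2)) x.1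
  obtain ⟨ε₀, hε₀, hfreq⟩ := exists_pos_frequently_lt_norm_of_not_hasFDerivAt
    (D := U.coprod (fderiv ℝ (fun t => f (x.1, t)) x.2)) fun h => hnd h.differentiableAt
  obtain ⟨j, hj⟩ := exists_nat_one_div_lt (by positivity : 0 < ε₀ / 14)
  obtain ⟨i, hi⟩ := hT.exists_dist_lt U (by positivity : (0 : ℝ) < 1 / (j + 1))
  rw [dist_comm, dist_eq_norm] at hi
  obtain ⟨N, hN⟩ := hf.exists_eventually_isLipschitzBoundAt
  obtain ⟨m, hNm, hPm⟩ := (tendsto_one_div_add_atTop_nhds_zero_nat.eventually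
    (hN.and (h₁.hasFDerivAt.eventually_isFstPartialApproxAt hi))).exists
  exact ⟨i, N, j, m, hNm, hPm, frequently_lt_norm_increment h₂.hasFDerivAt (by positivity) hi.le
    (by linarith) hfreq⟩

end LargeIncrement

theorem sigmaPorous_exceptional_set_partial_frechet_lipschitz_general
    {X₁ X₂ Y : Type*} [NormedAddCommGroup X₁] [NormedSpace ℝ X₁]
    [NormedAddCommGroup X₂] [NormedSpace ℝ X₂]
    [NormedAddCommGroup Y] [NormedSpace ℝ Y]
    [TopologicalSpace.SeparableSpace (X₁ →L[ℝ] Y)]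
    (G : Set (X₁ × X₂)) (f : X₁ × X₂ → Y) :
    ∃ A : Set (X₁ × X₂), A ⊆ G ∧ SigmaPorous A ∧
      ∀ x ∈ G \ A,
        (LipschitzAtPt f x ∧
         DifferentiableAt ℝ (fun t : X₁ => f (t, x.2)) x.1 ∧
         DifferentiableAt ℝ (fun t : X₂ => f (x.1, t)) x.2) →
        DifferentiableAt ℝ f x := by
  obtain ⟨T, hT⟩ := TopologicalSpace.exists_dense_seq (X₁ →L[ℝ] Y)
  let E : ℕ × ℕ × ℕ × ℕ → Set (X₁ × X₂) := fun ⟨i, N, j, m⟩ =>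
    G ∩ largeIncrementSet f (T i) N (1 / (j + 1)) (1 / (m + 1))
  refine ⟨⋃ k, E k, iUnion_subset fun _ => inter_subset_left,
    sigmaPorous_iUnion fun _ => (porous_largeIncrementSet (Nat.cast_nonneg _) (by positivity)
      (by positivity)).mono inter_subset_right, ?_⟩
  rintro x ⟨hxG, hxA⟩ ⟨hf, h₁, h₂⟩
  by_contra hnd
  obtain ⟨i, N, j, m, hx⟩ := exists_mem_largeIncrementSet hT hf h₁ h₂ hnd
  exact hxA (mem_iUnion.2 ⟨(i, N, j, m), hxG, hx⟩)

theorem sigmaPorous_exceptional_set_partial_frechet_lipschitz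
    {X₁ X₂ Y : Type*} [NormedAddCommGroup X₁] [NormedSpace ℝ X₁] [CompleteSpace X₁]
    [NormedAddCommGroup X₂] [NormedSpace ℝ X₂] [CompleteSpace X₂]
    [NormedAddCommGroup Y] [NormedSpace ℝ Y] [CompleteSpace Y]
    [TopologicalSpace.SeparableSpace (X₁ →L[ℝ] Y)]
    (G : Set (X₁ × X₂)) (hG : IsOpen G) (f : X₁ × X₂ → Y) :
    ∃ A : Set (X₁ × X₂), A ⊆ G ∧ SigmaPorous A ∧
      ∀ x ∈ G \ A,
        (LipschitzAtPt f x ∧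
         DifferentiableAt ℝ (fun t : X₁ => f (t, x.2)) x.1 ∧
         DifferentiableAt ℝ (fun t : X₂ => f (x.1, t)) x.2) →
        DifferentiableAt ℝ f x :=
  sigmaPorous_exceptional_set_partial_frechet_lipschitz_general G f
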